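/- For all integers n ≥ 3 and m ≥ 1, the quiver of tagged m-arcs Γ_⊙(n,m) with the map τ_m is a stable translation quiver, and it is isomorphic as a translation quiver to (Γ(D_n,m), τ̃): there is a bijection ρ from the tagged m-arcs to the vertex set of Γ(D_n,m) such that there is an m-move from an arc α to an arc β if and only if there is an arrow ρ(α) → ρ(β) in Γ(D_n,m), and ρ(τ_m(α)) = τ̃(ρ(α)) for all tagged m-arcs α. -/

import Mathlib

/-!
Common combinatorial definitions for the translation quivers of
Baur–Marsh, "A geometric description of the m-cluster categories of type Dₙ".

* `DLab` is the type of second coordinates of vertices of a type-`D` translation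
  quiver: `DLab.z false` is the label `0`, `DLab.z true` is the label `0̄`, and
  `DLab.pos j` is the (unbarred) label `j ≥ 1`.
* `DVertex N h` is the vertex set `ℤ/N × {0, 0̄, 1, …, h−2}`.
* `DArrow N h` is the arrow relation of the translation quiver with `N` columns
  and labels `0, 0̄, 1, …, h−2`.
* `DTau N c` is the translation: `(i,j) ↦ (i−1, j̄)` when `i = 0`, `j ∈ {0,0̄}` and
  `c` is odd, and `(i,j) ↦ (i−1,j)` otherwise.

With these conventions, `Γ(D_N, 1)` is `(DVertex N N, DArrow N N, DTau N N)`
and `Γ(D_n, m)` is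
`(DVertex (n*m−m+1) n, DArrow (n*m−m+1) n, DTau (n*m−m+1) (n*m))`.
-/

/-- Labels `0` (= `z false`), `0̄` (= `z true`) and `j ≥ 1` (= `pos j`). -/
inductive DLab : Type
  | z : Bool → DLab
  | pos : ℕ → DLab
deriving DecidableEq

/-- The bar operation on labels: swaps `0` and `0̄`, fixes all other labels. -/
def DLab.bar : DLab → DLab
  | .z b => .z (!b)
  | .pos j => .pos j

/-- The vertex set `ℤ/N × {0, 0̄, 1, …, h−2}`. -/
def DVertex (N h : ℕ) : Set (ZMod N × DLab) :=
  {v | ∀ j : ℕ, v.2 = DLab.pos j → 1 ≤ j ∧ j ≤ h - 2}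

/-- The arrows `(i,j) → (i,j−1)` and `(i,j−1) → (i+1,j)` for `1 ≤ j ≤ h−2`,
together with `(i,1) → (i,0̄)` and `(i,0̄) → (i+1,1)`. -/
inductive DArrow (N h : ℕ) : ZMod N × DLab → ZMod N × DLab → Prop
  | down (i : ZMod N) (j : ℕ) (h1 : 2 ≤ j) (h2 : j ≤ h - 2) :
      DArrow N h (i, DLab.pos j) (i, DLab.pos (j - 1))
  | toZ (i : ZMod N) (b : Bool) :
      DArrow N h (i, DLab.pos 1) (i, DLab.z b)
  | fromZ (i : ZMod N) (b : Bool) :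
      DArrow N h (i, DLab.z b) (i + 1, DLab.pos 1)
  | up (i : ZMod N) (j : ℕ) (h1 : 1 ≤ j) (h2 : j + 1 ≤ h - 2) :
      DArrow N h (i, DLab.pos j) (i + 1, DLab.pos (j + 1))

/-- The translation `τ(i,j) = (i−1, j̄)` if `i = 0`, `j ∈ {0,0̄}` and `c` is odd,
and `τ(i,j) = (i−1, j)` otherwise.  For `Γ(D_N,1)` one takes `c = N`; for
`Γ(D_n,m)` one takes `c = n*m` (and `N = n*m−m+1`). -/
def DTau (N c : ℕ) : ZMod N × DLab → ZMod N × DLab := fun v =>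
  match v with
  | (i, DLab.z b) =>
      if i = 0 ∧ c % 2 = 1 then (i - 1, DLab.z (!b)) else (i - 1, DLab.z b)
  | (i, DLab.pos j) => (i - 1, DLab.pos j)

/-- `p 0 → p 1 → ⋯ → p m` is a path in `Γ(D_N,1)`. -/
def IsPath (N m : ℕ) (p : ℕ → ZMod N × DLab) : Prop :=
  ∀ k, k < m → DArrow N N (p k) (p (k + 1))

/-- `p 0 → p 1 → ⋯ → p m` is a sectional path in `Γ(D_N,1)`:
`τ (p (k+1)) ≠ p (k−1)` for `1 ≤ k ≤ m − 1`. -/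
def IsSectional (N m : ℕ) (p : ℕ → ZMod N × DLab) : Prop :=
  IsPath N m p ∧ ∀ k, 1 ≤ k → k + 1 ≤ m → DTau N N (p (k + 1)) ≠ p (k - 1)

/-- The extra condition defining restricted paths: there is no `1 ≤ k ≤ m−1`
such that for some `r`, `p (k+1) = (r, 0)` and `p (k−1) = (r−1, 0̄)`, or
`p (k+1) = (r, 0̄)` and `p (k−1) = (r−1, 0)`. -/
def NoForbidden (N m : ℕ) (p : ℕ → ZMod N × DLab) : Prop :=
  ¬ ∃ k, 1 ≤ k ∧ k + 1 ≤ m ∧ ∃ r : ZMod N,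
      ((p (k + 1) = (r, DLab.z false) ∧ p (k - 1) = (r - 1, DLab.z true)) ∨
       (p (k + 1) = (r, DLab.z true) ∧ p (k - 1) = (r - 1, DLab.z false)))

/-- `p 0 → p 1 → ⋯ → p m` is a restricted sectional path in `Γ(D_N,1)`. -/
def IsRestricted (N m : ℕ) (p : ℕ → ZMod N × DLab) : Prop :=
  IsSectional N m p ∧ NoForbidden N m p

/-- There is a restricted sectional path of length `m` from `x` to `y` in
`Γ(D_N,1)`; these are exactly the arrows `x → y` of the restricted `m`-th power
`μ_m(Γ(D_N,1))`. -/
def RSPath (N m : ℕ) (x y : ZMod N × DLab) : Prop :=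
  ∃ p : ℕ → ZMod N × DLab, IsRestricted N m p ∧ p 0 = x ∧ p m = y

/-- The set `V = {(r,s) : s ∈ {0,0̄} or m ∣ s}` inside the vertex set of
`Γ(D_N,1)`. -/
def VSet (N m : ℕ) : Set (ZMod N × DLab) :=
  {v | v ∈ DVertex N N ∧ ∀ j : ℕ, v.2 = DLab.pos j → m ∣ j}

/-- The map `σ'` from the vertex set of `Γ(D_n,m)` to the vertex set of
`Γ(D_N,1)`, where `N = n*m−m+1`:  `σ'(i,j) = (i*m, j*m)` if `j ∉ {0,0̄}`, or if
`j ∈ {0,0̄}`, `m` is odd and `n` is even; otherwise, with `i.val` the standard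
representative of `i`, `σ'(i,j) = (i*m, j*m)` if `⌊i*m/N⌋` is even and
`σ'(i,j) = (i*m, (j̄)*m)` if `⌊i*m/N⌋` is odd (with the conventions
`0*m = 0` and `0̄*m = 0̄`). -/
def DSigma (n m : ℕ) : ZMod (n * m - m + 1) × DLab → ZMod (n * m - m + 1) × DLab :=
  fun v =>
    match v with
    | (i, DLab.pos j) => (i * (m : ZMod (n * m - m + 1)), DLab.pos (j * m))
    | (i, DLab.z b) =>
        if m % 2 = 1 ∧ n % 2 = 0 then
          (i * (m : ZMod (n * m - m + 1)), DLab.z b)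
        else if (i.val * m) / (n * m - m + 1) % 2 = 0 then
          (i * (m : ZMod (n * m - m + 1)), DLab.z b)
        else
          (i * (m : ZMod (n * m - m + 1)), DLab.z (!b))

/-- `C` is a connected component of the quiver with arrow relation `A`:
it is nonempty, closed under arrows in both directions, and any two of its
vertices are connected by an unoriented path. -/
def IsConnComponent {α : Type*} (A : α → α → Prop) (C : Set α) : Prop :=
  C.Nonempty ∧ (∀ x ∈ C, ∀ y, (A x y ∨ A y x) → y ∈ C) ∧
    ∀ x ∈ C, ∀ y ∈ C, Relation.ReflTransGen (fun a b => A a b ∨ A b a) x y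

/-- The set `X_k = {(i, j) : j ∈ {k, m+k, …, (n−2)m+k}}`. -/
def XSet (N n m k : ℕ) : Set (ZMod N × DLab) :=
  {v | ∃ (i : ZMod N) (l : ℕ), l ≤ n - 2 ∧ v = (i, DLab.pos (l * m + k))}

/-- Vertex set `ℤ/N × {1, …, h}` of the translation quiver `Γ(A_h, N)`
(the Auslander–Reiten quiver of `D^b(A_h)/τ^N`). -/
def AVertex (N h : ℕ) : Set (ZMod N × ℕ) :=
  {v | 1 ≤ v.2 ∧ v.2 ≤ h}

/-- Arrows of `Γ(A_h, N)`: `(i,j) → (i,j−1)` for `2 ≤ j ≤ h` and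
`(i,j) → (i+1,j+1)` for `1 ≤ j ≤ h−1`. -/
inductive AArrow (N h : ℕ) : ZMod N × ℕ → ZMod N × ℕ → Prop
  | down (i : ZMod N) (j : ℕ) (h1 : 2 ≤ j) (h2 : j ≤ h) :
      AArrow N h (i, j) (i, j - 1)
  | up (i : ZMod N) (j : ℕ) (h1 : 1 ≤ j) (h2 : j + 1 ≤ h) :
      AArrow N h (i, j) (i + 1, j + 1)

/-- Translation of `Γ(A_h, N)`: `(i,j) ↦ (i−1, j)`. -/
def ATau (N : ℕ) (v : ZMod N × ℕ) : ZMod N × ℕ := (v.1 - 1, v.2)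

/-- Tagged arcs in the punctured `N`-gon: `TArc.arc i k` is the arc
`D_{i, i+1+k*m}` (for `1 ≤ k ≤ n−2`), and `TArc.tag i b` is the tagged arc
`D_{ii}^+` (for `b = false`) or `D_{ii}^-` (for `b = true`). -/
inductive TArc (N : ℕ) : Type
  | arc : ZMod N → ℕ → TArc N
  | tag : ZMod N → Bool → TArc N

/-- The set of tagged `m`-arcs: arcs `D_{i,i+1+k*m}` with `1 ≤ k ≤ n−2`
together with all tagged arcs `D_{ii}^±`. -/
def TArcSet (N n : ℕ) : Set (TArc N) :=
  {a | ∀ (i : ZMod N) (k : ℕ), a = TArc.arc i k → 1 ≤ k ∧ k ≤ n - 2}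

/-- The `m`-moves between tagged `m`-arcs, i.e. the arrows of `Γ_⊙(n,m)`:
`D_{i,i+1+km} → D_{i,i+1+(k+1)m}` for `1 ≤ k ≤ n−3`;
`D_{i,i+1+km} → D_{i+m,i+1+km} = D_{i+m,(i+m)+1+(k−1)m}` for `2 ≤ k ≤ n−2`;
`D_{i,i+1+(n−2)m} → D_{ii}^±`; and
`D_{ii}^± → D_{i+m,i} = D_{i+m,(i+m)+1+(n−2)m}`. -/
inductive MMove (N n m : ℕ) : TArc N → TArc N → Prop
  | extend (i : ZMod N) (k : ℕ) (h1 : 1 ≤ k) (h2 : k ≤ n - 3) :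
      MMove N n m (TArc.arc i k) (TArc.arc i (k + 1))
  | rotate (i : ZMod N) (k : ℕ) (h1 : 2 ≤ k) (h2 : k ≤ n - 2) :
      MMove N n m (TArc.arc i k) (TArc.arc (i + (m : ZMod N)) (k - 1))
  | toTag (i : ZMod N) (b : Bool) :
      MMove N n m (TArc.arc i (n - 2)) (TArc.tag i b)
  | fromTag (i : ZMod N) (b : Bool) :
      MMove N n m (TArc.tag i b) (TArc.arc (i + (m : ZMod N)) (n - 2))

/-- The map `τ_m` on tagged `m`-arcs: `D_{i,i+1+km} ↦ D_{i−m,(i−m)+1+km}` and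
`D_{ii}^± ↦ D_{i−m,i−m}^±` if `m` is even, `D_{ii}^± ↦ D_{i−m,i−m}^∓` if `m`
is odd. -/
def TauArc (N m : ℕ) : TArc N → TArc N
  | .arc i k => .arc (i - (m : ZMod N)) k
  | .tag i b => .tag (i - (m : ZMod N)) (if m % 2 = 1 then !b else b)

/-!
Since `N = (n - 1) m + 1`, the residue `m` is invertible in `ℤ/N`, with inverse `1 - n`.
Sending `D_{i,i+1+km}` to `(i m⁻¹, n - 1 - k)` and `D_{ii}^±` to `(i m⁻¹, 0 or 0̄)` turns
the rotation by `m` underlying the `m`-moves and `τ_m` into the shift by one column in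
`Γ(D_n,m)`.
The only subtlety is the tags: for odd `m`, `τ_m` swaps `±` at every step, whereas `τ̃` swaps
`0, 0̄` only when leaving column `0` (and only when `nm` is odd). So the tag is twisted by the
parity of the column; the two conventions agree across column `0` because `N - 1 = (n - 1) m`.
-/

section TauArc

variable {N : ℕ}

def tauArcInv (N m : ℕ) : TArc N → TArc N
  | .arc i k => .arc (i + (m : ZMod N)) k
  | .tag i b => .tag (i + (m : ZMod N)) (if m % 2 = 1 then !b else b)

lemma tauArcInv_leftInverse (m : ℕ) : Function.LeftInverse (tauArcInv N m) (TauArc N m) := by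
  rintro (⟨i, k⟩ | ⟨i, b⟩)
  · simp [TauArc, tauArcInv]
  · by_cases hm : m % 2 = 1 <;> simp [TauArc, tauArcInv, hm]

lemma tauArcInv_rightInverse (m : ℕ) : Function.RightInverse (tauArcInv N m) (TauArc N m) := by
  rintro (⟨i, k⟩ | ⟨i, b⟩)
  · simp [TauArc, tauArcInv]
  · by_cases hm : m % 2 = 1 <;> simp [TauArc, tauArcInv, hm]

lemma mapsTo_tauArc (n m : ℕ) : Set.MapsTo (TauArc N m) (TArcSet N n) (TArcSet N n) := by
  rintro (⟨i, k⟩ | ⟨i, b⟩) ha i' k' h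
  · cases h
    exact ha i k rfl
  · cases h

lemma mapsTo_tauArcInv (n m : ℕ) : Set.MapsTo (tauArcInv N m) (TArcSet N n) (TArcSet N n) := by
  rintro (⟨i, k⟩ | ⟨i, b⟩) ha i' k' h
  · cases h
    exact ha i k rfl
  · cases h

theorem bijOn_tauArc (n m : ℕ) : Set.BijOn (TauArc N m) (TArcSet N n) (TArcSet N n) :=
  Set.InvOn.bijOn
    ⟨(tauArcInv_leftInverse m).leftInvOn _, (tauArcInv_rightInverse m).rightInvOn _⟩
    (mapsTo_tauArc n m) (mapsTo_tauArcInv n m)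

theorem mmove_iff_mmove_tauArc (n m : ℕ) (x y : TArc N) :
    MMove N n m y x ↔ MMove N n m (TauArc N m x) y := by
  constructor
  · rintro (⟨i, k, h1, h2⟩ | ⟨i, k, h1, h2⟩ | ⟨i, b⟩ | ⟨i, b⟩)
    · simpa [TauArc] using
        MMove.rotate (n := n) (m := m) (i - (m : ZMod N)) (k + 1) (by omega) (by omega)
    · have hk : k - 1 + 1 = k := by omega
      simpa [TauArc, hk] using MMove.extend (n := n) (m := m) i (k - 1) (by omega) (by omega)
    · simpa [TauArc] using
        MMove.fromTag (n := n) (m := m) (i - (m : ZMod N)) (if m % 2 = 1 then !b else b)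
    · simpa [TauArc] using MMove.toTag (n := n) (m := m) i b
  · rcases x with ⟨i, k⟩ | ⟨i, b⟩ <;> simp only [TauArc] <;> intro h <;> cases h
    · simpa using MMove.rotate (n := n) (m := m) (i - (m : ZMod N)) (k + 1) (by omega) (by omega)
    · have hk : k - 1 + 1 = k := by omega
      simpa [hk] using MMove.extend (n := n) (m := m) i (k - 1) (by omega) (by omega)
    · simpa using MMove.fromTag (n := n) (m := m) (i - (m : ZMod N)) _
    · simpa using MMove.toTag (n := n) (m := m) i b

end TauArc

def tagTwist (N m : ℕ) (j : ZMod N) : Bool := decide (m % 2 = 1 ∧ j.val % 2 = 1)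

section Twist

variable {N n m : ℕ}

lemma ZMod.val_sub_one_of_ne_zero [NeZero N] {j : ZMod N} (hj : j ≠ 0) :
    (j - 1).val = j.val - 1 := by
  have hpos : 0 < j.val := ZMod.val_pos.mpr hj
  have hone : (1 : ZMod N).val = 1 := by
    rw [ZMod.val_one_eq_one_mod, Nat.mod_eq_of_lt (by have := ZMod.val_lt j; omega)]
  rw [ZMod.val_sub (by omega), hone]

lemma tagTwist_sub_one (hn : 1 ≤ n) (hN : N = n * m - m + 1) (j : ZMod N) :
    xor (decide (m % 2 = 1)) (tagTwist N m (j - 1)) =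
      xor (decide (j = 0 ∧ n * m % 2 = 1)) (tagTwist N m j) := by
  have : NeZero N := ⟨by omega⟩
  have hnm := Nat.mul_mod n m 2
  have hmn : m ≤ n * m := Nat.le_mul_of_pos_left m hn
  by_cases hj : j = 0
  · subst hj
    obtain ⟨N', rfl⟩ : ∃ N', N = N' + 1 := ⟨N - 1, by omega⟩
    rcases Nat.mod_two_eq_zero_or_one m with hm | hm <;>
      simp [tagTwist, hm] at hnm ⊢
    · omega
    · rw [← decide_not, decide_eq_decide]
      omega
  · have hval := ZMod.val_sub_one_of_ne_zero hj
    have hpos : 0 < j.val := ZMod.val_pos.mpr hj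
    rcases Nat.mod_two_eq_zero_or_one m with hm | hm <;>
      simp [tagTwist, hj, hval, hm]
    rw [← decide_not, decide_eq_decide]
    omega

lemma natCast_mul_one_sub_eq_one (hn : 1 ≤ n) (hN : N = n * m - m + 1) :
    (m : ZMod N) * (1 - n) = 1 := by
  have hN' : ((n * m - m + 1 : ℕ) : ZMod N) = 0 := hN ▸ ZMod.natCast_self N
  rw [Nat.cast_add, Nat.cast_sub (Nat.le_mul_of_pos_left m hn)] at hN'
  push_cast at hN'
  linear_combination -hN'

end Twist

section Isomorphism

variable {N : ℕ}

def arcToVertex (n : ℕ) (u : ZMod N) (ε : ZMod N → Bool) : TArc N → ZMod N × DLab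
  | .arc i k => (i * u, .pos (n - 1 - k))
  | .tag i b => (i * u, .z (xor b (ε (i * u))))

def vertexToArc (n m : ℕ) (ε : ZMod N → Bool) : ZMod N × DLab → TArc N
  | (j, .pos l) => .arc (j * m) (n - 1 - l)
  | (j, .z b) => .tag (j * m) (xor b (ε j))

lemma mapsTo_arcToVertex (n : ℕ) (u : ZMod N) (ε : ZMod N → Bool) :
    Set.MapsTo (arcToVertex n u ε) (TArcSet N n) (DVertex N n) := by
  rintro (⟨i, k⟩ | ⟨i, b⟩) ha j hj
  · cases hj
    have := ha i k rfl
    omega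
  · cases hj

lemma mapsTo_vertexToArc (n m : ℕ) (ε : ZMod N → Bool) :
    Set.MapsTo (vertexToArc n m ε) (DVertex N n) (TArcSet N n) := by
  rintro ⟨j, b | l⟩ hv i k hk
  · cases hk
  · cases hk
    have := hv l rfl
    omega

variable {n m : ℕ} {u : ZMod N} (ε : ZMod N → Bool)

lemma leftInvOn_vertexToArc (hu : (m : ZMod N) * u = 1) :
    Set.LeftInvOn (vertexToArc n m ε) (arcToVertex n u ε) (TArcSet N n) := by
  have hi (i : ZMod N) : i * u * m = i := by rw [mul_assoc, mul_comm u, hu, mul_one]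
  rintro (⟨i, k⟩ | ⟨i, b⟩) ha
  · have := ha i k rfl
    have hk : n - 1 - (n - 1 - k) = k := by omega
    simp [arcToVertex, vertexToArc, hi, hk]
  · simp [arcToVertex, vertexToArc, hi]

lemma rightInvOn_vertexToArc (hu : (m : ZMod N) * u = 1) :
    Set.RightInvOn (vertexToArc n m ε) (arcToVertex n u ε) (DVertex N n) := by
  have hj (j : ZMod N) : j * m * u = j := by rw [mul_assoc, hu, mul_one]
  rintro ⟨j, b | l⟩ hv
  · simp [arcToVertex, vertexToArc, hj]
  · have := hv l rfl
    have hl : n - 1 - (n - 1 - l) = l := by omega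
    simp [arcToVertex, vertexToArc, hj, hl]

theorem bijOn_arcToVertex (hu : (m : ZMod N) * u = 1) :
    Set.BijOn (arcToVertex n u ε) (TArcSet N n) (DVertex N n) :=
  Set.InvOn.bijOn ⟨leftInvOn_vertexToArc ε hu, rightInvOn_vertexToArc ε hu⟩
    (mapsTo_arcToVertex n u ε) (mapsTo_vertexToArc n m ε)

lemma darrow_arcToVertex_of_mmove (hn : 2 ≤ n) (hu : (m : ZMod N) * u = 1) {x y : TArc N}
    (h : MMove N n m x y) : DArrow N n (arcToVertex n u ε x) (arcToVertex n u ε y) := by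
  have hcol (i : ZMod N) : (i + m) * u = i * u + 1 := by rw [add_mul, hu]
  have htop : n - 1 - (n - 2) = 1 := by omega
  rcases h with ⟨i, k, h1, h2⟩ | ⟨i, k, h1, h2⟩ | ⟨i, b⟩ | ⟨i, b⟩
  · have hk : n - 1 - k - 1 = n - 1 - (k + 1) := by omega
    simpa [arcToVertex, hk] using
      DArrow.down (N := N) (h := n) (i * u) (n - 1 - k) (by omega) (by omega)
  · have hk : n - 1 - k + 1 = n - 1 - (k - 1) := by omega
    simpa [arcToVertex, hk, hcol] using
      DArrow.up (N := N) (h := n) (i * u) (n - 1 - k) (by omega) (by omega)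
  · simpa [arcToVertex, htop] using DArrow.toZ (N := N) (h := n) (i * u) (xor b (ε (i * u)))
  · simpa [arcToVertex, htop, hcol] using
      DArrow.fromZ (N := N) (h := n) (i * u) (xor b (ε (i * u)))

lemma mmove_vertexToArc_of_darrow {a b : ZMod N × DLab} (h : DArrow N n a b) :
    MMove N n m (vertexToArc n m ε a) (vertexToArc n m ε b) := by
  have hrow (i : ZMod N) : (i + 1) * (m : ZMod N) = i * m + m := by ring
  have htop : n - 1 - 1 = n - 2 := by omega
  rcases h with ⟨i, j, h1, h2⟩ | ⟨i, b⟩ | ⟨i, b⟩ | ⟨i, j, h1, h2⟩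
  · have hj : n - 1 - j + 1 = n - 1 - (j - 1) := by omega
    simpa [vertexToArc, hj] using
      MMove.extend (n := n) (m := m) (i * (m : ZMod N)) (n - 1 - j) (by omega) (by omega)
  · simpa [vertexToArc, htop] using
      MMove.toTag (n := n) (m := m) (i * (m : ZMod N)) (xor b (ε i))
  · simpa [vertexToArc, hrow, htop] using
      MMove.fromTag (n := n) (m := m) (i * (m : ZMod N)) (xor b (ε i))
  · have hj : n - 1 - j - 1 = n - 1 - (j + 1) := by omega
    simpa [vertexToArc, hj, hrow] using
      MMove.rotate (n := n) (m := m) (i * (m : ZMod N)) (n - 1 - j) (by omega) (by omega)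

theorem mmove_iff_darrow_arcToVertex (hn : 2 ≤ n) (hu : (m : ZMod N) * u = 1) {x y : TArc N}
    (hx : x ∈ TArcSet N n) (hy : y ∈ TArcSet N n) :
    MMove N n m x y ↔ DArrow N n (arcToVertex n u ε x) (arcToVertex n u ε y) := by
  refine ⟨darrow_arcToVertex_of_mmove ε hn hu, fun h => ?_⟩
  have := mmove_vertexToArc_of_darrow (m := m) ε h
  rwa [leftInvOn_vertexToArc ε hu hx, leftInvOn_vertexToArc ε hu hy] at this

theorem arcToVertex_tauArc (hn : 1 ≤ n) (hN : N = n * m - m + 1)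
    (hu : (m : ZMod N) * u = 1) (x : TArc N) :
    arcToVertex n u (tagTwist N m) (TauArc N m x) =
      DTau N (n * m) (arcToVertex n u (tagTwist N m) x) := by
  have hcol (i : ZMod N) : (i - m) * u = i * u - 1 := by rw [sub_mul, hu]
  rcases x with ⟨i, k⟩ | ⟨i, b⟩
  · simp [TauArc, arcToVertex, DTau, hcol]
  · have := tagTwist_sub_one hn hN (i * u)
    simp only [TauArc, arcToVertex, DTau, hcol]
    split_ifs <;> simp_all

end Isomorphism

theorem tagged_arc_quiver_is_translation_quiver_iso_gamma_general (n m N : ℕ)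
    (hn : 3 ≤ n) (hN : N = n * m - m + 1) :
    ((Set.BijOn (TauArc N m) (TArcSet N n) (TArcSet N n)) ∧
      ∀ x ∈ TArcSet N n, ∀ y ∈ TArcSet N n,
        (MMove N n m y x ↔ MMove N n m (TauArc N m x) y)) ∧
    ∃ ρ : TArc N → ZMod N × DLab,
      Set.BijOn ρ (TArcSet N n) (DVertex N n) ∧
      (∀ x ∈ TArcSet N n, ∀ y ∈ TArcSet N n,
        (MMove N n m x y ↔ DArrow N n (ρ x) (ρ y))) ∧
      ∀ x ∈ TArcSet N n, ρ (TauArc N m x) = DTau N (n * m) (ρ x) := by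
  have hu : (m : ZMod N) * (1 - n) = 1 := natCast_mul_one_sub_eq_one (by omega) hN
  refine ⟨⟨bijOn_tauArc n m, fun x _ y _ => mmove_iff_mmove_tauArc n m x y⟩,
    arcToVertex n (1 - n) (tagTwist N m), bijOn_arcToVertex _ hu,
    fun x hx y hy => mmove_iff_darrow_arcToVertex _ (by omega) hu hx hy,
    fun x _ => arcToVertex_tauArc (by omega) hN hu x⟩

/-- For `n ≥ 3`, `m ≥ 1` and `N = n*m−m+1`, the quiver
`Γ_⊙(n,m)` of tagged `m`-arcs of the punctured `N`-gon, with the map `τ_m`, is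
a stable translation quiver, and it is isomorphic as a translation quiver to
`(Γ(D_n,m), τ̃)`: there is a bijection `ρ` from the tagged `m`-arcs to the
vertex set of `Γ(D_n,m)` such that there is an `m`-move `α → β` iff there is an
arrow `ρ α → ρ β` in `Γ(D_n,m)`, and `ρ(τ_m α) = τ̃(ρ α)` for all tagged
`m`-arcs `α`. -/
theorem tagged_arc_quiver_is_translation_quiver_iso_gamma (n m N : ℕ)
    (hn : 3 ≤ n) (hm : 1 ≤ m) (hN : N = n * m - m + 1) :
    ((Set.BijOn (TauArc N m) (TArcSet N n) (TArcSet N n)) ∧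
      ∀ x ∈ TArcSet N n, ∀ y ∈ TArcSet N n,
        (MMove N n m y x ↔ MMove N n m (TauArc N m x) y)) ∧
    ∃ ρ : TArc N → ZMod N × DLab,
      Set.BijOn ρ (TArcSet N n) (DVertex N n) ∧
      (∀ x ∈ TArcSet N n, ∀ y ∈ TArcSet N n,
        (MMove N n m x y ↔ DArrow N n (ρ x) (ρ y))) ∧
      ∀ x ∈ TArcSet N n, ρ (TauArc N m x) = DTau N (n * m) (ρ x) :=
  tagged_arc_quiver_is_translation_quiver_iso_gamma_general n m N hn hN
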